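/- For any m-exponent c and any B ∈ F(c), BL(Φ(B), c) ≤ BL(B, c). -/

import Mathlib

open MeasureTheory ENNReal Matrix Filter Topology

noncomputable section

/-- The space of `m`-transformations: tuples of linear maps `ℝ^n → ℝ^{n_j}`,
represented as matrices. -/
abbrev MTrans (m n : ℕ) (nd : Fin m → ℕ) := ∀ j : Fin m, Matrix (Fin (nd j)) (Fin n) ℝ

/-- A valid input for the Brascamp–Lieb inequality: each `f j` is measurable and
has positive finite integral. -/
def IsInput {m : ℕ} {nd : Fin m → ℕ} (f : ∀ j : Fin m, (Fin (nd j) → ℝ) → ℝ≥0∞) : Prop :=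
  ∀ j, Measurable (f j) ∧ 0 < ∫⁻ y, f j y ∧ ∫⁻ y, f j y < ⊤

/-- The Brascamp–Lieb ratio `BL(B,c;f)`. -/
def BLratio {m n : ℕ} {nd : Fin m → ℕ} (B : MTrans m n nd) (c : Fin m → ℝ)
    (f : ∀ j : Fin m, (Fin (nd j) → ℝ) → ℝ≥0∞) : ℝ≥0∞ :=
  (∫⁻ x : Fin n → ℝ, ∏ j, f j (B j *ᵥ x) ^ c j) / ∏ j, (∫⁻ y, f j y) ^ c j

/-- The Brascamp–Lieb constant `BL(B,c)`. -/
def BLconst {m n : ℕ} {nd : Fin m → ℕ} (B : MTrans m n nd) (c : Fin m → ℝ) : ℝ≥0∞ :=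
  ⨆ (f : ∀ j : Fin m, (Fin (nd j) → ℝ) → ℝ≥0∞) (_ : IsInput f), BLratio B c f

/-- Membership in `F(c)`: finite BL constant and projection-normalised. -/
def MemF {m n : ℕ} {nd : Fin m → ℕ} (B : MTrans m n nd) (c : Fin m → ℝ) : Prop :=
  BLconst B c < ⊤ ∧ ∀ j, B j * (B j)ᵀ = 1

/-- Membership in `G(c)`: the datum `(B,c)` is geometric. -/
def Geometric {m n : ℕ} {nd : Fin m → ℕ} (B : MTrans m n nd) (c : Fin m → ℝ) : Prop :=
  (∀ j, B j * (B j)ᵀ = 1) ∧ ∑ j, c j • ((B j)ᵀ * B j) = 1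

/-- Equivalence of `m`-transformations: `B̃_j = T_j⁻¹ B_j T` for invertible `T, T_j`. -/
def EquivTrans {m n : ℕ} {nd : Fin m → ℕ} (B Bt : MTrans m n nd) : Prop :=
  ∃ (T : Matrix (Fin n) (Fin n) ℝ) (Tj : ∀ j, Matrix (Fin (nd j)) (Fin (nd j)) ℝ),
    IsUnit T ∧ (∀ j, IsUnit (Tj j)) ∧ ∀ j, Bt j = (Tj j)⁻¹ * B j * T

open scoped ComplexOrder in
/-- The positive semidefinite square root of a positive semidefinite matrix (the definition
`Matrix.PosSemidef.sqrt` of the older Mathlib, since removed). -/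
def Matrix.PosSemidef.sqrt {n : Type*} [Fintype n] [DecidableEq n] {𝕜 : Type*} [RCLike 𝕜]
    {A : Matrix n n 𝕜} (hA : A.PosSemidef) : Matrix n n 𝕜 :=
  hA.1.eigenvectorUnitary.1 * diagonal ((↑) ∘ Real.sqrt ∘ hA.1.eigenvalues) *
    (star hA.1.eigenvectorUnitary : Matrix n n 𝕜)

open Classical in
/-- The map `φ`: `φ(B)_j = (B_j B_j^*)^{-1/2} B_j` (defined where `B_j B_j^*` is
positive definite, and as `B_j` otherwise). -/
def phiMap {m n : ℕ} {nd : Fin m → ℕ} (B : MTrans m n nd) : MTrans m n nd := fun j =>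
  if h : (B j * (B j)ᵀ).PosDef then (h.posSemidef.sqrt)⁻¹ * B j else B j

open Classical in
/-- The map `ψ`: `ψ(B)_j = B_j M^{-1/2}` with `M = ∑ c_j B_j^* B_j` (defined where `M`
is positive definite, and as `B_j` otherwise). -/
def psiMap {m n : ℕ} {nd : Fin m → ℕ} (c : Fin m → ℝ) (B : MTrans m n nd) : MTrans m n nd :=
  fun j =>
    if h : (∑ i, c i • ((B i)ᵀ * B i)).PosDef then B j * (h.posSemidef.sqrt)⁻¹ else B j

/-- The BL scaling map `Φ = φ ∘ ψ`. -/
def PhiMap {m n : ℕ} {nd : Fin m → ℕ} (c : Fin m → ℝ) (B : MTrans m n nd) : MTrans m n nd :=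
  phiMap (psiMap c B)

/-- The operator norm of a matrix, viewed as a linear map between Euclidean spaces. -/
def opNorm {a b : ℕ} (A : Matrix (Fin a) (Fin b) ℝ) : ℝ :=
  ‖LinearMap.toContinuousLinearMap (Matrix.toEuclideanLin A)‖


/-!
If `M = ∑ c_j B_jᵀ B_j` is not positive definite, `ψ` fixes `B`, and so does `φ` because
`B_j B_jᵀ = 1`. Otherwise `Φ(B)` is equivalent to `B`: `Φ(B)_j = C_j⁻¹ B_j M^{-1/2}` where
`C_j = (B_j M⁻¹ B_jᵀ)^{1/2}`. Changing variables in `x` and in each `y_j` gives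
`BL(Φ(B), c) ≤ det(M)^{1/2} ∏ det(B_j M⁻¹ B_jᵀ)^{c_j/2} BL(B, c)`, and this factor is at most
`1` by `det A ≤ exp (tr A - dim)` for positive definite `A`, applied to `M` and to every
`B_j M⁻¹ B_jᵀ`: the exponents cancel because `tr M = ∑ c_j n_j` and
`∑ c_j tr (B_j M⁻¹ B_jᵀ) = tr (M M⁻¹) = n`.
-/

open scoped MatrixOrder ComplexOrder

theorem Matrix.PosSemidef.sqrt_eq_cfcSqrt {ι 𝕜 : Type*} [Fintype ι] [DecidableEq ι] [RCLike 𝕜]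
    {A : Matrix ι ι 𝕜} (hA : A.PosSemidef) : hA.sqrt = CFC.sqrt A := by
  rw [CFC.sqrt_eq_cfc, cfc_nnreal_eq_real _ A, hA.1.cfc_eq, IsHermitian.cfc,
    Unitary.conjStarAlgAut_apply, Matrix.PosSemidef.sqrt]
  congr 3
  funext i
  simp [hA.eigenvalues_nonneg i]

theorem Matrix.PosDef.det_sqrt_pos {ι : Type*} [Fintype ι] [DecidableEq ι]
    {A : Matrix ι ι ℝ} (hA : A.PosDef) : 0 < (CFC.sqrt A).det := by
  rw [hA.posSemidef.det_sqrt, RCLike.sqrt_real]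
  exact Real.sqrt_pos.2 hA.det_pos

theorem Matrix.PosDef.det_le_exp_trace_sub_card {ι : Type*} [Fintype ι] [DecidableEq ι]
    {A : Matrix ι ι ℝ} (hA : A.PosDef) : A.det ≤ Real.exp (A.trace - Fintype.card ι) := by
  rw [hA.isHermitian.det_eq_prod_eigenvalues, hA.isHermitian.trace_eq_sum_eigenvalues]
  calc ∏ i, (hA.isHermitian.eigenvalues i : ℝ)
      ≤ ∏ i, Real.exp (hA.isHermitian.eigenvalues i - 1) :=
        Finset.prod_le_prod (fun i _ => (hA.eigenvalues_pos i).le)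
          fun i _ => by linarith [Real.add_one_le_exp (hA.isHermitian.eigenvalues i - 1)]
    _ = Real.exp ((∑ i, hA.isHermitian.eigenvalues i) - Fintype.card ι) := by
        simp [← Real.exp_sum, Finset.sum_sub_distrib]

theorem Matrix.PosDef.mul_mul_transpose_of_mul_transpose_eq_one {κ ι : Type*} [Fintype κ]
    [DecidableEq κ] [Fintype ι] {A : Matrix ι ι ℝ} (hA : A.PosDef) {P : Matrix κ ι ℝ}
    (hP : P * Pᵀ = 1) : (P * A * Pᵀ).PosDef := by
  have hinj : Function.Injective P.vecMul :=
    Function.LeftInverse.injective (g := fun v => v ᵥ* Pᵀ) fun x => by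
      simp [Matrix.vecMul_vecMul, hP]
  simpa using hA.mul_mul_conjTranspose_same hinj

theorem lintegral_comp_inv_mulVec {ι : Type*} [Fintype ι] [DecidableEq ι] {A : Matrix ι ι ℝ}
    (hA : A.det ≠ 0) {h : (ι → ℝ) → ℝ≥0∞} (hh : Measurable h) :
    ∫⁻ x, h (A⁻¹ *ᵥ x) = ENNReal.ofReal |A.det| * ∫⁻ y, h y := by
  have hA' : A⁻¹.det ≠ 0 := by simpa [Matrix.det_nonsing_inv, Ring.inverse_eq_inv] using hA
  have hmeas : Measurable (Matrix.toLin' A⁻¹) :=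
    (Matrix.toLin' A⁻¹).continuous_of_finiteDimensional.measurable
  have hdet : |A.det| = |A⁻¹.det⁻¹| := by simp [Matrix.det_nonsing_inv, Ring.inverse_eq_inv]
  rw [hdet, ← smul_eq_mul, ← lintegral_smul_measure,
    ← Real.map_matrix_volume_pi_eq_smul_volume_pi hA', lintegral_map hh hmeas]
  rfl

variable {m n : ℕ} {nd : Fin m → ℕ}

/-- The matrix `M` in the definition of `ψ`. -/
def BLgram (c : Fin m → ℝ) (B : MTrans m n nd) : Matrix (Fin n) (Fin n) ℝ :=
  ∑ i, c i • ((B i)ᵀ * B i)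

section BLgram

variable {c : Fin m → ℝ} {B : MTrans m n nd}

theorem trace_BLgram (hB : ∀ j, B j * (B j)ᵀ = 1) : (BLgram c B).trace = ∑ j, c j * nd j := by
  simp [BLgram, Matrix.trace_sum, Matrix.trace_mul_comm (B _)ᵀ, hB]

theorem sum_mul_trace_mul_inv_BLgram_mul_transpose (hM : IsUnit (BLgram c B).det) :
    ∑ j, c j * (B j * (BLgram c B)⁻¹ * (B j)ᵀ).trace = n := by
  calc ∑ j, c j * (B j * (BLgram c B)⁻¹ * (B j)ᵀ).trace
      = (BLgram c B * (BLgram c B)⁻¹).trace := by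
        simp only [BLgram, Finset.sum_mul, Matrix.trace_sum, Matrix.smul_mul, Matrix.trace_smul,
          smul_eq_mul, Matrix.mul_assoc, Matrix.trace_mul_comm (B _)ᵀ]
    _ = n := by simp [Matrix.mul_nonsing_inv _ hM]

theorem det_BLgram_mul_prod_det_rpow_le_one (hc : ∀ j, 0 ≤ c j) (hB : ∀ j, B j * (B j)ᵀ = 1)
    (hM : (BLgram c B).PosDef) :
    (BLgram c B).det * ∏ j, (B j * (BLgram c B)⁻¹ * (B j)ᵀ).det ^ c j ≤ 1 := by
  set M := BLgram c B
  set G := fun j => B j * M⁻¹ * (B j)ᵀ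
  have hG : ∀ j, (G j).PosDef := fun j => hM.inv.mul_mul_transpose_of_mul_transpose_eq_one (hB j)
  have hGnonneg : ∀ j ∈ Finset.univ, 0 ≤ (G j).det ^ c j :=
    fun j _ => Real.rpow_nonneg (hG j).det_pos.le _
  have hMdet : M.det ≤ Real.exp (M.trace - n) := by
    simpa using hM.det_le_exp_trace_sub_card
  have hGdet : ∀ j, (G j).det ^ c j ≤ Real.exp (c j * ((G j).trace - nd j)) := fun j => by
    rw [mul_comm, Real.exp_mul]
    exact Real.rpow_le_rpow (hG j).det_pos.le (by simpa using (hG j).det_le_exp_trace_sub_card)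
      (hc j)
  calc M.det * ∏ j, (G j).det ^ c j
      ≤ Real.exp (M.trace - n) * ∏ j, Real.exp (c j * ((G j).trace - nd j)) :=
        mul_le_mul hMdet (Finset.prod_le_prod hGnonneg fun j _ => hGdet j)
          (Finset.prod_nonneg hGnonneg) (Real.exp_pos _).le
    _ = Real.exp ((M.trace - n) + ((∑ j, c j * (G j).trace) - ∑ j, c j * nd j)) := by
        rw [← Real.exp_sum, ← Real.exp_add]
        simp only [mul_sub, Finset.sum_sub_distrib]
    _ = 1 := by
        rw [trace_BLgram hB, sum_mul_trace_mul_inv_BLgram_mul_transpose hM.det_pos.ne'.isUnit]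
        simp

theorem abs_det_sqrt_BLgram_mul_prod_le_one (hc : ∀ j, 0 ≤ c j)
    (hB : ∀ j, B j * (B j)ᵀ = 1) (hM : (BLgram c B).PosDef) :
    |(CFC.sqrt (BLgram c B)).det| *
      ∏ j, |(CFC.sqrt (B j * (BLgram c B)⁻¹ * (B j)ᵀ)).det| ^ c j ≤ 1 := by
  have hG := fun j => hM.inv.mul_mul_transpose_of_mul_transpose_eq_one (hB j)
  have hsqrt_rpow : ∀ j, √((B j * (BLgram c B)⁻¹ * (B j)ᵀ).det ^ c j) =
      √(B j * (BLgram c B)⁻¹ * (B j)ᵀ).det ^ c j := fun j => by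
    rw [Real.sqrt_eq_rpow, Real.sqrt_eq_rpow, ← Real.rpow_mul (hG j).det_pos.le, mul_comm,
      Real.rpow_mul (hG j).det_pos.le]
  simp only [hM.posSemidef.det_sqrt, fun j => (hG j).posSemidef.det_sqrt, RCLike.sqrt_real,
    abs_of_nonneg (Real.sqrt_nonneg _), ← hsqrt_rpow]
  rw [← Real.sqrt_prod _ fun j _ => Real.rpow_nonneg (hG j).det_pos.le _,
    ← Real.sqrt_mul hM.det_pos.le]
  exact Real.sqrt_le_one.mpr (det_BLgram_mul_prod_det_rpow_le_one hc hB hM)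

theorem PhiMap_eq_self_of_not_posDef (hB : ∀ j, B j * (B j)ᵀ = 1)
    (hM : ¬ (BLgram c B).PosDef) : PhiMap c B = B := by
  funext j
  have hψ : psiMap c B = B := funext fun j => dif_neg hM
  have hBj : (B j * (B j)ᵀ).PosDef := hB j ▸ Matrix.PosDef.one
  rw [PhiMap, hψ, phiMap, dif_pos hBj, Matrix.PosSemidef.sqrt_eq_cfcSqrt, hB j, CFC.sqrt_one,
    inv_one, Matrix.one_mul]

theorem PhiMap_apply_of_posDef (hB : ∀ j, B j * (B j)ᵀ = 1) (hM : (BLgram c B).PosDef)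
    (j : Fin m) :
    PhiMap c B j =
    (CFC.sqrt (B j * (BLgram c B)⁻¹ * (B j)ᵀ))⁻¹ * B j * (CFC.sqrt (BLgram c B))⁻¹ := by
  have hψ : psiMap c B j = B j * CFC.sqrt (BLgram c B)⁻¹ := by
    rw [← hM.posSemidef.inv_sqrt, ← hM.posSemidef.sqrt_eq_cfcSqrt]
    exact dif_pos hM
  have hψψ : psiMap c B j * (psiMap c B j)ᵀ = B j * (BLgram c B)⁻¹ * (B j)ᵀ := by
    have hsym : (CFC.sqrt (BLgram c B)⁻¹)ᵀ = CFC.sqrt (BLgram c B)⁻¹ := by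
      simpa [IsHermitian] using (CFC.sqrt_nonneg (BLgram c B)⁻¹).posSemidef.isHermitian
    rw [hψ, Matrix.transpose_mul, hsym, Matrix.mul_assoc, ← Matrix.mul_assoc (CFC.sqrt _),
      CFC.sqrt_mul_sqrt_self _ hM.inv.posSemidef.nonneg, Matrix.mul_assoc]
  have hG : (psiMap c B j * (psiMap c B j)ᵀ).PosDef :=
    hψψ ▸ hM.inv.mul_mul_transpose_of_mul_transpose_eq_one (hB j)
  rw [PhiMap, phiMap, dif_pos hG, Matrix.PosSemidef.sqrt_eq_cfcSqrt, hψψ, hψ,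
    hM.posSemidef.inv_sqrt]
  exact (Matrix.mul_assoc _ _ _).symm

end BLgram

theorem IsInput.comp_inv_mulVec {f : ∀ j : Fin m, (Fin (nd j) → ℝ) → ℝ≥0∞}
    (hf : IsInput f)
    {C : ∀ j, Matrix (Fin (nd j)) (Fin (nd j)) ℝ} (hC : ∀ j, (C j).det ≠ 0) :
    IsInput fun j y => f j ((C j)⁻¹ *ᵥ y) := fun j => by
  obtain ⟨hmeas, hpos, hfin⟩ := hf j
  refine ⟨by fun_prop, ?_, ?_⟩ <;> rw [lintegral_comp_inv_mulVec (hC j) hmeas]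
  · exact ENNReal.mul_pos (by simpa using hC j) hpos.ne'
  · exact ENNReal.mul_lt_top ENNReal.ofReal_lt_top hfin

theorem BLratio_inv_mul_mul_inv (B : MTrans m n nd) (c : Fin m → ℝ)
    {R : Matrix (Fin n) (Fin n) ℝ} {C : ∀ j, Matrix (Fin (nd j)) (Fin (nd j)) ℝ}
    (hR : R.det ≠ 0) (hC : ∀ j, (C j).det ≠ 0)
    {f : ∀ j : Fin m, (Fin (nd j) → ℝ) → ℝ≥0∞} (hf : IsInput f) :
    BLratio (fun j => (C j)⁻¹ * B j * R⁻¹) c f =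
      ENNReal.ofReal (|R.det| * ∏ j, |(C j).det| ^ c j) *
        BLratio B c (fun j y => f j ((C j)⁻¹ *ᵥ y)) := by
  set g : ∀ j : Fin m, (Fin (nd j) → ℝ) → ℝ≥0∞ := fun j y => f j ((C j)⁻¹ *ᵥ y)
  set P := ∏ j, ENNReal.ofReal |(C j).det| ^ c j
  have hP0 : P ≠ 0 := Finset.prod_ne_zero_iff.2 fun j _ => by simp [hC j]
  have hPtop : P ≠ ⊤ := ENNReal.prod_ne_top fun j _ => by simp [hC j]
  have hconst :
      ENNReal.ofReal (|R.det| * ∏ j, |(C j).det| ^ c j) = ENNReal.ofReal |R.det| * P := by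
    rw [ENNReal.ofReal_mul (abs_nonneg _), ENNReal.ofReal_prod_of_nonneg fun j _ => by positivity]
    simp_rw [P, ENNReal.ofReal_rpow_of_pos (abs_pos.2 (hC _))]
  have hnum : ∫⁻ x, ∏ j, f j (((C j)⁻¹ * B j * R⁻¹) *ᵥ x) ^ c j =
      ENNReal.ofReal |R.det| * ∫⁻ u, ∏ j, g j (B j *ᵥ u) ^ c j := by
    simp_rw [← Matrix.mulVec_mulVec]
    exact lintegral_comp_inv_mulVec hR (h := fun u => ∏ j, g j (B j *ᵥ u) ^ c j)
      (by have := fun j => (hf j).1; fun_prop)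
  have hden : ∏ j, (∫⁻ y, g j y) ^ c j = P * ∏ j, (∫⁻ y, f j y) ^ c j := by
    rw [← Finset.prod_mul_distrib]
    refine Finset.prod_congr rfl fun j _ => ?_
    rw [lintegral_comp_inv_mulVec (hC j) (hf j).1,
      ENNReal.mul_rpow_of_ne_top ENNReal.ofReal_ne_top (hf j).2.2.ne]
  rw [BLratio, BLratio, hnum, hden, hconst, mul_assoc, ← mul_div_assoc P,
    ENNReal.mul_div_mul_left _ _ hP0 hPtop, mul_div_assoc]

theorem BLconst_inv_mul_mul_inv_le (B : MTrans m n nd) (c : Fin m → ℝ)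
    {R : Matrix (Fin n) (Fin n) ℝ} {C : ∀ j, Matrix (Fin (nd j)) (Fin (nd j)) ℝ}
    (hR : R.det ≠ 0) (hC : ∀ j, (C j).det ≠ 0) :
    BLconst (fun j => (C j)⁻¹ * B j * R⁻¹) c ≤
      ENNReal.ofReal (|R.det| * ∏ j, |(C j).det| ^ c j) * BLconst B c :=
  iSup₂_le fun f hf => by
    rw [BLratio_inv_mul_mul_inv B c hR hC hf]
    gcongr
    exact le_iSup₂ (f := fun g (_ : IsInput g) => BLratio B c g) _ (hf.comp_inv_mulVec hC)

theorem BLconst_PhiMap_le {m n : ℕ} {nd : Fin m → ℕ} (c : Fin m → ℝ)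
    (hc : ∀ j, 0 < c j) (B : MTrans m n nd) (hB : MemF B c) :
    BLconst (PhiMap c B) c ≤ BLconst B c := by
  obtain ⟨-, hBB⟩ := hB
  by_cases hM : (BLgram c B).PosDef
  swap
  · rw [PhiMap_eq_self_of_not_posDef hBB hM]
  have hG := fun j => hM.inv.mul_mul_transpose_of_mul_transpose_eq_one (hBB j)
  have hconst := abs_det_sqrt_BLgram_mul_prod_le_one (fun j => (hc j).le) hBB hM
  rw [funext (PhiMap_apply_of_posDef hBB hM)]
  calc _ ≤ _ :=
        BLconst_inv_mul_mul_inv_le B c hM.det_sqrt_pos.ne' fun j => (hG j).det_sqrt_pos.ne'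
    _ ≤ 1 * BLconst B c := by gcongr; exact ENNReal.ofReal_le_one.2 hconst
    _ = BLconst B c := one_mul _

end
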